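/- arXiv:1902.02509 — 4 statements merged into one kernel-verified Lean document; each statement's English description precedes it below -/
import Mathlib

section
/- Let ‖·‖_{S,p} denote the Schatten p-norm on n×q matrices, p* its Hölder conjugate, σ > 0, c ∈ R, and ω_σ(Z) = (1/2σ)‖Z‖² + cσ where ‖·‖ is the Frobenius norm. Then the inf-convolution satisfies (‖·‖_{S,p} □ ω_σ)(Z) = ‖Z‖²/(2σ) + cσ − (σ/2)‖Π_{B_{S,p*}}(Z/σ) − Z/σ‖², where Π_{B_{S,p*}} is the Frobenius projection onto the unit Schatten p*-ball. -/
open scoped ENNReal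
open Matrix

/-- Singular values of a real `n × q` matrix (padded with zeros to length `n`):
square roots of the eigenvalues of `A * Aᵀ`. -/
noncomputable def singVal {n q : ℕ} (A : Matrix (Fin n) (Fin q) ℝ) (i : Fin n) : ℝ :=
  Real.sqrt ((Matrix.isHermitian_mul_conjTranspose_self A).eigenvalues i)

/-- Schatten `p`-norm: the `ℓ_p` norm of the singular values. -/
noncomputable def schattenNorm {n q : ℕ} (p : ℝ≥0∞) (A : Matrix (Fin n) (Fin q) ℝ) : ℝ :=
  if p = ∞ then ⨆ i, singVal A i else (∑ i, (singVal A i) ^ p.toReal) ^ (1 / p.toReal)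

/-- Frobenius norm of a matrix. -/
noncomputable def frobNorm {n q : ℕ} (A : Matrix (Fin n) (Fin q) ℝ) : ℝ :=
  Real.sqrt (∑ i, ∑ j, (A i j) ^ 2)

/-!
By von Neumann's trace inequality and Hölder's inequality, `tr (U Wᵀ) ≤ ‖U‖_{S,p*} ‖W‖_{S,p}`,
with equality for a suitable `U` in the unit `p*`-ball `K`. So the Schatten `p`-norm is the
support function of the convex set `K`, and `⟪P, W⟫ ≤ ‖W‖_{S,p}` for `P ∈ K`. Completing the
square,
`⟪P, W⟫ + ‖Z - W‖² / 2σ = ‖Z‖² / 2σ - (σ / 2) ‖P - Z / σ‖² + ‖Z - W - σ P‖² / 2σ`,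
which bounds the inf-convolution from below. At `W = Z - σ P` the square vanishes, and the
variational inequality of the projection `P` shows that `P` maximises `⟪·, W⟫` over `K`.

The trace inequality: writing `A = Q diag(s) V` and `B = Q' diag(t) V'` (SVD),
`tr (A Bᵀ) = ∑ᵢⱼ sᵢ tⱼ (Qᵀ Q')ᵢⱼ (V V'ᵀ)ᵢⱼ`, where `|(Qᵀ Q')ᵢⱼ (V V'ᵀ)ᵢⱼ|` is doubly
substochastic by Bessel's inequality; Hölder's inequality with these weights concludes.
-/
open Finset

lemma ENNReal.HolderConjugate.cases {r r' : ℝ≥0∞} [r.HolderConjugate r'] :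
    (r = 1 ∧ r' = ∞) ∨ (r = ∞ ∧ r' = 1) ∨
      (r ≠ ∞ ∧ r' ≠ ∞ ∧ r.toReal.HolderConjugate r'.toReal) := by
  by_cases hr : r = ∞
  · exact .inr <| .inl ⟨hr, (ENNReal.HolderConjugate.eq_top_iff_eq_one r r').mp hr⟩
  by_cases hr' : r' = ∞
  · exact .inl ⟨(ENNReal.HolderConjugate.eq_top_iff_eq_one r' r).mp hr', hr'⟩
  exact .inr <| .inr ⟨hr, hr', ENNReal.HolderConjugate.toReal_of_ne_top hr hr'⟩

section vecLpNorm

variable {ι : Type*} [Fintype ι]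

/-- The `ℓ^r` norm without absolute values, only meaningful for nonnegative vectors;
`schattenNorm r A = vecLpNorm r (singVal A)` by definition. -/
noncomputable def vecLpNorm (r : ℝ≥0∞) (x : ι → ℝ) : ℝ :=
  if r = ∞ then ⨆ i, x i else (∑ i, x i ^ r.toReal) ^ (1 / r.toReal)

@[simp] lemma vecLpNorm_one (x : ι → ℝ) : vecLpNorm 1 x = ∑ i, x i := by
  simp [vecLpNorm]

@[simp] lemma vecLpNorm_top (x : ι → ℝ) : vecLpNorm ∞ x = ⨆ i, x i := by
  simp [vecLpNorm]

lemma vecLpNorm_of_ne_top {r : ℝ≥0∞} (hr : r ≠ ∞) (x : ι → ℝ) :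
    vecLpNorm r x = (∑ i, x i ^ r.toReal) ^ (1 / r.toReal) := if_neg hr

lemma vecLpNorm_nonneg (r : ℝ≥0∞) {x : ι → ℝ} (hx : 0 ≤ x) : 0 ≤ vecLpNorm r x := by
  unfold vecLpNorm
  split
  · exact Real.iSup_nonneg hx
  · exact Real.rpow_nonneg (sum_nonneg fun i _ => Real.rpow_nonneg (hx i) _) _

lemma vecLpNorm_zero {r : ℝ≥0∞} (hr : r ≠ 0) : vecLpNorm r (0 : ι → ℝ) = 0 := by
  by_cases htop : r = ∞
  · simp [htop]
  · have : r.toReal ≠ 0 := (ENNReal.toReal_pos hr htop).ne'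
    simp [vecLpNorm_of_ne_top htop, Real.zero_rpow this, Real.zero_rpow (inv_ne_zero this)]

lemma vecLpNorm_congr {r : ℝ≥0∞} {x y : ι → ℝ} (h : univ.val.map x = univ.val.map y) :
    vecLpNorm r x = vecLpNorm r y := by
  have hrange : Set.range x = Set.range y := by
    ext a
    simpa using congrArg (a ∈ ·) h
  have hsum : ∀ e : ℝ, ∑ i, x i ^ e = ∑ i, y i ^ e := fun e => by
    have := congrArg (fun s => (s.map (· ^ e)).sum) h
    simp only [Multiset.map_map] at this
    exact this
  unfold vecLpNorm
  split
  · exact congrArg sSup hrange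
  · rw [hsum]

end vecLpNorm

section kernel

variable {ι κ : Type*} [Fintype ι] [Fintype κ]

lemma sum_kernel_mul_le_sum_mul_iSup {s : ι → ℝ} {t : κ → ℝ} (hs : 0 ≤ s) (ht : 0 ≤ t)
    {D : ι → κ → ℝ} (hD : ∀ i j, 0 ≤ D i j) (hrow : ∀ i, ∑ j, D i j ≤ 1) :
    ∑ i, ∑ j, D i j * s i * t j ≤ (∑ i, s i) * ⨆ j, t j := by
  have hT : 0 ≤ ⨆ j, t j := Real.iSup_nonneg ht
  rw [sum_mul]
  gcongr with i
  calc ∑ j, D i j * s i * t j ≤ ∑ j, D i j * s i * ⨆ j, t j := by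
        gcongr with j
        · exact mul_nonneg (hD i j) (hs i)
        · exact le_ciSup (Set.finite_range t).bddAbove j
    _ = (∑ j, D i j) * (s i * ⨆ j, t j) := by rw [sum_mul]; simp only [mul_assoc]
    _ ≤ s i * ⨆ j, t j := mul_le_of_le_one_left (mul_nonneg (hs i) hT) (hrow i)

lemma sum_kernel_mul_le_of_holderConjugate {a b : ℝ} (hab : a.HolderConjugate b)
    {s : ι → ℝ} {t : κ → ℝ} (hs : 0 ≤ s) (ht : 0 ≤ t)
    {D : ι → κ → ℝ} (hD : ∀ i j, 0 ≤ D i j) (hrow : ∀ i, ∑ j, D i j ≤ 1)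
    (hcol : ∀ j, ∑ i, D i j ≤ 1) :
    ∑ i, ∑ j, D i j * s i * t j ≤
      (∑ i, s i ^ a) ^ (1 / a) * (∑ j, t j ^ b) ^ (1 / b) := by
  -- Hölder over `ι × κ` for the weights `D` split as `D ^ (1 / a) * D ^ (1 / b)`
  have hpow : ∀ {c : ℝ}, c ≠ 0 → ∀ i j (x : ℝ), 0 ≤ x →
      (D i j ^ (1 / c) * x) ^ c = D i j * x ^ c := fun hc i j x hx => by
    rw [Real.mul_rpow (Real.rpow_nonneg (hD i j) _) hx, ← Real.rpow_mul (hD i j),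
      one_div_mul_cancel hc, Real.rpow_one]
  have hholder := Real.inner_le_Lp_mul_Lq_of_nonneg (univ : Finset (ι × κ)) hab
    (f := fun ij => D ij.1 ij.2 ^ (1 / a) * s ij.1) (g := fun ij => D ij.1 ij.2 ^ (1 / b) * t ij.2)
    (fun ij _ => mul_nonneg (Real.rpow_nonneg (hD _ _) _) (hs _))
    (fun ij _ => mul_nonneg (Real.rpow_nonneg (hD _ _) _) (ht _))
  have hfg : ∀ i j, D i j ^ (1 / a) * s i * (D i j ^ (1 / b) * t j) = D i j * s i * t j := by
    intro i j
    rw [show D i j * s i * t j = D i j ^ (1 / a + 1 / b) * s i * t j by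
      rw [hab.one_div_add_one_div, div_one, Real.rpow_one],
      Real.rpow_add' (hD i j) (by rw [hab.one_div_add_one_div]; norm_num)]
    ring
  simp only [Fintype.sum_prod_type, hfg, hpow hab.ne_zero _ _ _ (hs _),
    hpow hab.symm.ne_zero _ _ _ (ht _)] at hholder
  have hS : ∑ i, ∑ j, D i j * s i ^ a ≤ ∑ i, s i ^ a := sum_le_sum fun i _ => by
    rw [← sum_mul]
    exact mul_le_of_le_one_left (Real.rpow_nonneg (hs i) _) (hrow i)
  have hT : ∑ i, ∑ j, D i j * t j ^ b ≤ ∑ j, t j ^ b := by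
    rw [sum_comm]
    refine sum_le_sum fun j _ => ?_
    rw [← sum_mul]
    exact mul_le_of_le_one_left (Real.rpow_nonneg (ht j) _) (hcol j)
  have hS₀ : 0 ≤ ∑ i, ∑ j, D i j * s i ^ a :=
    sum_nonneg fun i _ => sum_nonneg fun j _ => mul_nonneg (hD i j) (Real.rpow_nonneg (hs i) _)
  have hT₀ : 0 ≤ ∑ i, ∑ j, D i j * t j ^ b :=
    sum_nonneg fun i _ => sum_nonneg fun j _ => mul_nonneg (hD i j) (Real.rpow_nonneg (ht j) _)
  refine hholder.trans (mul_le_mul (Real.rpow_le_rpow hS₀ hS hab.one_div_nonneg)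
    (Real.rpow_le_rpow hT₀ hT hab.symm.one_div_nonneg) (Real.rpow_nonneg hT₀ _)
    (Real.rpow_nonneg (hS₀.trans hS) _))

theorem sum_kernel_mul_le_vecLpNorm_mul {r r' : ℝ≥0∞} [r.HolderConjugate r']
    {s : ι → ℝ} {t : κ → ℝ} (hs : 0 ≤ s) (ht : 0 ≤ t)
    {D : ι → κ → ℝ} (hD : ∀ i j, 0 ≤ D i j) (hrow : ∀ i, ∑ j, D i j ≤ 1)
    (hcol : ∀ j, ∑ i, D i j ≤ 1) :
    ∑ i, ∑ j, D i j * s i * t j ≤ vecLpNorm r s * vecLpNorm r' t := by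
  rcases ENNReal.HolderConjugate.cases (r := r) (r' := r') with
    ⟨rfl, rfl⟩ | ⟨rfl, rfl⟩ | ⟨hr, hr', hconj⟩
  · simpa using sum_kernel_mul_le_sum_mul_iSup hs ht hD hrow
  · rw [sum_comm, vecLpNorm_top, vecLpNorm_one, mul_comm]
    simpa only [mul_right_comm] using
      sum_kernel_mul_le_sum_mul_iSup ht hs (fun j i => hD i j) hcol
  · rw [vecLpNorm_of_ne_top hr, vecLpNorm_of_ne_top hr']
    exact sum_kernel_mul_le_of_holderConjugate hconj hs ht hD hrow hcol

end kernel

section dual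

variable {ι : Type*} [Fintype ι]

lemma exists_dual_of_holderConjugate {a b : ℝ} (hab : a.HolderConjugate b) {x : ι → ℝ}
    (hx : 0 ≤ x) (hx₀ : x ≠ 0) :
    ∃ d : ι → ℝ, 0 ≤ d ∧ (∀ i, x i = 0 → d i = 0) ∧
      (∑ i, d i ^ b) ^ (1 / b) ≤ 1 ∧ ∑ i, d i * x i = (∑ i, x i ^ a) ^ (1 / a) := by
  set S := (∑ i, x i ^ a) ^ (1 / a)
  have hsum : 0 < ∑ i, x i ^ a := by
    obtain ⟨i₀, hi₀⟩ := Function.ne_iff.mp hx₀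
    exact sum_pos' (fun i _ => Real.rpow_nonneg (hx i) _)
      ⟨i₀, mem_univ _, Real.rpow_pos_of_pos ((hx i₀).lt_of_ne' hi₀) _⟩
  have hS : 0 < S := Real.rpow_pos_of_pos hsum _
  have hSa : S ^ a = ∑ i, x i ^ a := by
    simp only [S, one_div]
    exact Real.rpow_inv_rpow hsum.le hab.ne_zero
  -- the dual vector is the gradient `(x / S) ^ (a - 1)` of the `ℓ^a` norm at `x`
  set y : ι → ℝ := fun i => x i / S
  have hy : 0 ≤ y := fun i => div_nonneg (hx i) hS.le
  have hya : ∑ i, y i ^ a = 1 := by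
    simp only [y, Real.div_rpow (hx _) hS.le, ← sum_div, hSa, div_self hsum.ne']
  refine ⟨fun i => y i ^ (a - 1), fun i => Real.rpow_nonneg (hy i) _, fun i hi => ?_, ?_, ?_⟩
  · simp [y, hi, Real.zero_rpow hab.sub_one_ne_zero]
  · simp only [← Real.rpow_mul (hy _), hab.sub_one_mul_conj, hya, Real.one_rpow, le_refl]
  · calc ∑ i, y i ^ (a - 1) * x i = S * ∑ i, y i ^ (a - 1 + 1) := by
          rw [mul_sum]
          refine sum_congr rfl fun i _ => ?_
          rw [Real.rpow_add' (hy i) (by simp [hab.ne_zero]), Real.rpow_one]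
          simp only [y]
          field_simp
      _ = S := by rw [sub_add_cancel, hya, mul_one]

theorem exists_vecLpNorm_le_one_sum_mul_eq {r r' : ℝ≥0∞} [r.HolderConjugate r'] {x : ι → ℝ}
    (hx : 0 ≤ x) :
    ∃ d : ι → ℝ, 0 ≤ d ∧ (∀ i, x i = 0 → d i = 0) ∧
      vecLpNorm r' d ≤ 1 ∧ ∑ i, d i * x i = vecLpNorm r x := by
  classical
  by_cases hx₀ : x = 0
  · refine ⟨0, le_rfl, fun _ _ => rfl, ?_, ?_⟩
    · rw [vecLpNorm_zero (ENNReal.HolderConjugate.ne_zero r' r)]; exact zero_le_one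
    · simp [hx₀, vecLpNorm_zero (ENNReal.HolderConjugate.ne_zero r r')]
  rcases ENNReal.HolderConjugate.cases (r := r) (r' := r') with
    ⟨rfl, rfl⟩ | ⟨rfl, rfl⟩ | ⟨hr, hr', hconj⟩
  · refine ⟨fun i => if x i = 0 then 0 else 1, fun i => by dsimp only; split_ifs <;> norm_num,
      fun i hi => if_pos hi, ?_, ?_⟩
    · exact Real.iSup_le (fun i => by split_ifs <;> norm_num) zero_le_one
    · rw [vecLpNorm_one]
      exact sum_congr rfl fun i _ => by dsimp only; split_ifs with h <;> simp [h]
  · obtain ⟨i₀, hi₀⟩ := Function.ne_iff.mp hx₀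
    have : Nonempty ι := ⟨i₀⟩
    obtain ⟨i₁, hi₁⟩ := Finite.exists_max x
    have hpos : 0 < x i₁ := ((hx i₀).lt_of_ne' hi₀).trans_le (hi₁ i₀)
    refine ⟨Pi.single i₁ 1, ?_, fun i hi => ?_, ?_, ?_⟩
    · exact Pi.single_nonneg.mpr zero_le_one
    · rcases eq_or_ne i i₁ with rfl | hne
      · exact absurd hi hpos.ne'
      · exact Pi.single_eq_of_ne hne _
    · simp
    · simp only [vecLpNorm_top, Pi.single_apply, ite_mul, one_mul, zero_mul, sum_ite_eq',
        mem_univ, if_true]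
      exact le_antisymm (le_ciSup (Set.finite_range x).bddAbove i₁) (ciSup_le hi₁)
  · simp only [vecLpNorm_of_ne_top hr, vecLpNorm_of_ne_top hr']
    exact exists_dual_of_holderConjugate hconj hx hx₀

end dual

section bessel

variable {ι ι' κ : Type*} [Fintype κ] [DecidableEq ι]

lemma sum_sq_mulVec_le_dotProduct_self [Fintype ι] {W : Matrix ι κ ℝ} {e : ι → ℝ}
    (hW : W * Wᵀ = diagonal e) (he : ∀ i, e i ≤ 1) (x : κ → ℝ) : ∑ i, (W *ᵥ x) i ^ 2 ≤ x ⬝ᵥ x := by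
  set c := W *ᵥ x with hc
  have hadj : ∀ y, (Wᵀ *ᵥ c) ⬝ᵥ y = c ⬝ᵥ (W *ᵥ y) := fun y => by
    rw [mulVec_transpose, ← dotProduct_mulVec]
  have hproj : 0 ≤ (x - Wᵀ *ᵥ c) ⬝ᵥ (x - Wᵀ *ᵥ c) :=
    sum_nonneg fun k _ => mul_self_nonneg _
  have hgram : (Wᵀ *ᵥ c) ⬝ᵥ (Wᵀ *ᵥ c) ≤ c ⬝ᵥ c := by
    rw [hadj, mulVec_mulVec, hW]
    refine sum_le_sum fun i _ => ?_
    simp only [mulVec_diagonal]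
    nlinarith [he i, sq_nonneg (c i)]
  simp only [sub_dotProduct, dotProduct_sub, dotProduct_comm x (Wᵀ *ᵥ c), hadj x, ← hc] at hproj
  simp only [dotProduct, ← sq] at hgram hproj ⊢
  linarith

lemma sum_row_sq_mul_transpose_le_one [Fintype ι'] [DecidableEq ι'] {X : Matrix ι κ ℝ}
    {Y : Matrix ι' κ ℝ} {e : ι → ℝ} {e' : ι' → ℝ} (hX : X * Xᵀ = diagonal e)
    (hY : Y * Yᵀ = diagonal e') (he : ∀ i, e i ≤ 1) (he' : ∀ j, e' j ≤ 1) (i : ι) :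
    ∑ j, (X * Yᵀ) i j ^ 2 ≤ 1 := by
  have hrow : X i ⬝ᵥ X i = e i := by
    simpa [mul_apply, dotProduct] using congrFun (congrFun hX i) i
  calc ∑ j, (X * Yᵀ) i j ^ 2 = ∑ j, (Y *ᵥ X i) j ^ 2 := by
        simp only [mul_apply, mulVec, dotProduct, transpose_apply, mul_comm]
    _ ≤ X i ⬝ᵥ X i := sum_sq_mulVec_le_dotProduct_self hY he' (X i)
    _ ≤ 1 := hrow ▸ he i

lemma sum_col_sq_mul_transpose_le_one [Fintype ι] [DecidableEq ι'] {X : Matrix ι κ ℝ}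
    {Y : Matrix ι' κ ℝ} {e : ι → ℝ} {e' : ι' → ℝ} (hX : X * Xᵀ = diagonal e)
    (hY : Y * Yᵀ = diagonal e') (he : ∀ i, e i ≤ 1) (he' : ∀ j, e' j ≤ 1) (j : ι') :
    ∑ i, (X * Yᵀ) i j ^ 2 ≤ 1 := by
  refine le_of_eq_of_le (sum_congr rfl fun i _ => ?_)
    (sum_row_sq_mul_transpose_le_one hY hX he' he j)
  rw [← transpose_apply (X * Yᵀ), transpose_mul, transpose_transpose]

end bessel

section svd

variable {n q : ℕ}

lemma singVal_nonneg (A : Matrix (Fin n) (Fin q) ℝ) : 0 ≤ singVal A := fun _ => Real.sqrt_nonneg _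

lemma sq_singVal (A : Matrix (Fin n) (Fin q) ℝ) (i : Fin n) :
    singVal A i ^ 2 = (isHermitian_mul_conjTranspose_self A).eigenvalues i :=
  Real.sq_sqrt ((posSemidef_self_mul_conjTranspose A).eigenvalues_nonneg i)

theorem exists_svd (A : Matrix (Fin n) (Fin q) ℝ) :
    ∃ Q : Matrix (Fin n) (Fin n) ℝ, Qᵀ * Q = 1 ∧ ∃ V : Matrix (Fin n) (Fin q) ℝ,
      V * Vᵀ = diagonal (fun i => if singVal A i = 0 then 0 else 1) ∧
      A = Q * diagonal (singVal A) * V := by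
  set hM := isHermitian_mul_conjTranspose_self A
  set Q : Matrix (Fin n) (Fin n) ℝ := (hM.eigenvectorUnitary : Matrix (Fin n) (Fin n) ℝ)
  set s := singVal A
  have hQ : Qᵀ * Q = 1 := by
    simpa [Q, star_eq_conjTranspose] using
      Matrix.mem_unitaryGroup_iff'.mp hM.eigenvectorUnitary.2
  set B := Qᵀ * A
  have hB : B * Bᵀ = diagonal (fun i => s i ^ 2) := by
    have := hM.conjStarAlgAut_star_eigenvectorUnitary
    simp only [Unitary.conjStarAlgAut_apply, Unitary.coe_star, star_eq_conjTranspose,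
      conjTranspose_eq_transpose_of_trivial, RCLike.ofReal_real_eq_id, Function.id_comp] at this
    simp only [B, s, sq_singVal, transpose_mul, transpose_transpose, ← this, Matrix.mul_assoc]
    rfl
  have hBrow : ∀ i, s i = 0 → ∀ k, B i k = 0 := by
    intro i hi k
    have hii := congrFun (congrFun hB i) i
    simp only [mul_apply, transpose_apply, diagonal_apply_eq, hi, ← sq] at hii
    exact pow_eq_zero_iff two_ne_zero |>.mp <|
      (sum_eq_zero_iff_of_nonneg fun _ _ => sq_nonneg _).mp (by simpa using hii) k (mem_univ k)
  -- `V = Σ⁻¹ B`, where `0⁻¹ = 0` discards the rows of `B` with `s i = 0`, which vanish anyway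
  refine ⟨Q, hQ, diagonal s⁻¹ * B, ?_, ?_⟩
  · rw [transpose_mul, diagonal_transpose, Matrix.mul_assoc, ← Matrix.mul_assoc B, hB,
      diagonal_mul_diagonal, diagonal_mul_diagonal]
    congr 1; ext i
    by_cases hi : s i = 0
    · simp [hi]
    · simp [hi]; field_simp
  · have hQQ : Q * Qᵀ = 1 := mul_eq_one_comm.mp hQ
    have hsB : diagonal s * (diagonal s⁻¹ * B) = B := by
      ext i k
      rw [← Matrix.mul_assoc, diagonal_mul_diagonal, diagonal_mul]
      by_cases hi : s i = 0
      · simp [hi, hBrow i hi k]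
      · simp [hi]
    rw [Matrix.mul_assoc, hsB, ← Matrix.mul_assoc, hQQ, Matrix.one_mul]

end svd

section schatten

variable {n q : ℕ}

open Polynomial in
lemma Matrix.IsHermitian.map_eigenvalues_eq {M Q : Matrix (Fin n) (Fin n) ℝ} (hM : M.IsHermitian)
    (hQ : Qᵀ * Q = 1) {μ : Fin n → ℝ} (h : M = Q * diagonal μ * Qᵀ) :
    univ.val.map hM.eigenvalues = univ.val.map μ := by
  have hchar : M.charpoly = ∏ i, (X - C (μ i)) := by
    rw [h, Matrix.mul_assoc, charpoly_mul_comm, Matrix.mul_assoc, hQ, Matrix.mul_one,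
      charpoly_diagonal]
  have := hM.roots_charpoly_eq_eigenvalues
  rw [hchar, roots_prod _ _ (prod_ne_zero_iff.mpr fun i _ => X_sub_C_ne_zero _)] at this
  simpa [RCLike.ofReal_real_eq_id] using this.symm

theorem schattenNorm_mul_diagonal_mul {Q : Matrix (Fin n) (Fin n) ℝ} (hQ : Qᵀ * Q = 1)
    {V : Matrix (Fin n) (Fin q) ℝ} {d e : Fin n → ℝ} (hV : V * Vᵀ = diagonal e) (hd : 0 ≤ d)
    (hde : ∀ i, d i * e i = d i) (r : ℝ≥0∞) :
    schattenNorm r (Q * diagonal d * V) = vecLpNorm r d := by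
  set U := Q * diagonal d * V
  have hU : U * Uᴴ = Q * diagonal (fun i => d i ^ 2) * Qᵀ := by
    simp only [U, conjTranspose_eq_transpose_of_trivial, transpose_mul, diagonal_transpose,
      Matrix.mul_assoc]
    rw [← Matrix.mul_assoc V, hV, ← Matrix.mul_assoc (diagonal e), diagonal_mul_diagonal,
      ← Matrix.mul_assoc (diagonal d), diagonal_mul_diagonal]
    simp only [← _root_.mul_assoc, hde, sq]
  have hsv : univ.val.map (singVal U) = univ.val.map d := by
    have := (isHermitian_mul_conjTranspose_self U).map_eigenvalues_eq hQ hU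
    calc univ.val.map (singVal U)
        = (univ.val.map (isHermitian_mul_conjTranspose_self U).eigenvalues).map Real.sqrt := by
          rw [Multiset.map_map]; rfl
      _ = univ.val.map d := by
          rw [this, Multiset.map_map]
          exact Multiset.map_congr rfl fun i _ => Real.sqrt_sq (hd i)
  exact vecLpNorm_congr hsv

lemma trace_svd_mul_transpose_svd (Q Q' : Matrix (Fin n) (Fin n) ℝ)
    (V V' : Matrix (Fin n) (Fin q) ℝ) (s t : Fin n → ℝ) :
    (Q * diagonal s * V * (Q' * diagonal t * V')ᵀ).trace =
      ∑ i, ∑ j, (Qᵀ * Q') i j * (V * V'ᵀ) i j * s i * t j := by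
  have hcycle : Q * diagonal s * V * (Q' * diagonal t * V')ᵀ =
      Q * (diagonal s * (V * V'ᵀ) * diagonal t * Q'ᵀ) := by
    simp only [transpose_mul, diagonal_transpose, Matrix.mul_assoc]
  have hM : diagonal s * (V * V'ᵀ) * diagonal t * Q'ᵀ * Q =
      diagonal s * (V * V'ᵀ) * diagonal t * (Qᵀ * Q')ᵀ := by
    simp only [transpose_mul, transpose_transpose, Matrix.mul_assoc]
  rw [hcycle, trace_mul_comm, hM]
  refine sum_congr rfl fun i _ => ?_
  rw [Matrix.diag, mul_apply]
  refine sum_congr rfl fun j _ => ?_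
  rw [mul_diagonal, diagonal_mul, transpose_apply]
  ring

end schatten

section duality

variable {n q : ℕ}

lemma sum_abs_mul_le_one {κ : Type*} [Fintype κ] {x y : κ → ℝ} (hx : ∑ j, x j ^ 2 ≤ 1)
    (hy : ∑ j, y j ^ 2 ≤ 1) : ∑ j, |x j * y j| ≤ 1 := by
  have h : ∀ j, |x j * y j| ≤ (x j ^ 2 + y j ^ 2) / 2 := fun j => by
    rw [abs_mul, ← sq_abs (x j), ← sq_abs (y j)]
    nlinarith [two_mul_le_add_sq |x j| |y j|]
  calc ∑ j, |x j * y j| ≤ ∑ j, (x j ^ 2 + y j ^ 2) / 2 := sum_le_sum fun j _ => h j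
    _ = (∑ j, x j ^ 2 + ∑ j, y j ^ 2) / 2 := by rw [← sum_add_distrib, sum_div]
    _ ≤ 1 := by linarith

theorem trace_mul_transpose_le_schattenNorm_mul {r r' : ℝ≥0∞} [r.HolderConjugate r']
    (A B : Matrix (Fin n) (Fin q) ℝ) :
    (A * Bᵀ).trace ≤ schattenNorm r A * schattenNorm r' B := by
  obtain ⟨Q, hQ, V, hV, hA⟩ := exists_svd A
  obtain ⟨Q', hQ', V', hV', hB⟩ := exists_svd B
  have hQ₁ : Qᵀ * Qᵀᵀ = diagonal 1 := by rw [transpose_transpose, hQ, diagonal_one']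
  have hQ₁' : Q'ᵀ * Q'ᵀᵀ = diagonal 1 := by rw [transpose_transpose, hQ', diagonal_one']
  have hone : ∀ i : Fin n, (1 : Fin n → ℝ) i ≤ 1 := fun _ => le_rfl
  have he : ∀ (C : Matrix (Fin n) (Fin q) ℝ) i, (if singVal C i = 0 then 0 else 1 : ℝ) ≤ 1 :=
    fun _ _ => by split_ifs <;> norm_num
  set D := fun i j => |(Qᵀ * Q') i j * (V * V'ᵀ) i j|
  have hrow : ∀ i, ∑ j, D i j ≤ 1 := fun i => sum_abs_mul_le_one
    (by simpa using sum_row_sq_mul_transpose_le_one hQ₁ hQ₁' hone hone i)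
    (sum_row_sq_mul_transpose_le_one hV hV' (he A) (he B) i)
  have hcol : ∀ j, ∑ i, D i j ≤ 1 := fun j => sum_abs_mul_le_one
    (by simpa using sum_col_sq_mul_transpose_le_one hQ₁ hQ₁' hone hone j)
    (sum_col_sq_mul_transpose_le_one hV hV' (he A) (he B) j)
  have hs := singVal_nonneg A
  have ht := singVal_nonneg B
  calc (A * Bᵀ).trace
      = ∑ i, ∑ j, (Qᵀ * Q') i j * (V * V'ᵀ) i j * singVal A i * singVal B j := by
        conv_lhs => rw [hA, hB]
        exact trace_svd_mul_transpose_svd ..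
    _ ≤ ∑ i, ∑ j, D i j * singVal A i * singVal B j :=
        sum_le_sum fun i _ => sum_le_sum fun j _ =>
          mul_le_mul_of_nonneg_right (mul_le_mul_of_nonneg_right (le_abs_self _) (hs i)) (ht j)
    _ ≤ schattenNorm r A * schattenNorm r' B :=
        sum_kernel_mul_le_vecLpNorm_mul hs ht (fun _ _ => abs_nonneg _) hrow hcol

theorem exists_schattenNorm_le_one_trace_eq {r r' : ℝ≥0∞} [r.HolderConjugate r']
    (W : Matrix (Fin n) (Fin q) ℝ) :
    ∃ U : Matrix (Fin n) (Fin q) ℝ, schattenNorm r' U ≤ 1 ∧ (U * Wᵀ).trace = schattenNorm r W := by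
  obtain ⟨Q, hQ, V, hV, hW⟩ := exists_svd W
  obtain ⟨d, hd, hsupp, hnorm, hsum⟩ :=
    exists_vecLpNorm_le_one_sum_mul_eq (r := r) (r' := r') (singVal_nonneg W)
  have hde : ∀ i, d i * (if singVal W i = 0 then 0 else 1) = d i := fun i => by
    split_ifs with h
    · simp [hsupp i h]
    · simp
  refine ⟨Q * diagonal d * V, (schattenNorm_mul_diagonal_mul hQ hV hd hde r').trans_le hnorm, ?_⟩
  conv_lhs => rw [hW]
  rw [trace_svd_mul_transpose_svd, hQ, hV]
  simp only [one_apply, diagonal_apply, ite_mul, one_mul, zero_mul, sum_ite_eq, mem_univ,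
    if_true]
  refine Eq.trans (sum_congr rfl fun i _ => ?_) hsum
  split_ifs with h <;> simp [h]

theorem convex_setOf_schattenNorm_le_one {r : ℝ≥0∞} (hr : 1 ≤ r) :
    Convex ℝ {U : Matrix (Fin n) (Fin q) ℝ | schattenNorm r U ≤ 1} := by
  have := ENNReal.HolderConjugate.conjExponent hr
  intro U hU U' hU' a b ha hb hab
  obtain ⟨V, hV, hVeq⟩ := exists_schattenNorm_le_one_trace_eq (r := r) (r' := r.conjExponent)
    (a • U + b • U')
  have hle : ∀ U'' : Matrix (Fin n) (Fin q) ℝ, schattenNorm r U'' ≤ 1 → (V * U''ᵀ).trace ≤ 1 :=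
    fun U'' hU'' => (trace_mul_transpose_le_schattenNorm_mul V U'').trans
      (mul_le_one₀ hV (vecLpNorm_nonneg _ (singVal_nonneg _)) hU'')
  show schattenNorm r (a • U + b • U') ≤ 1
  rw [← hVeq, transpose_add, transpose_smul, transpose_smul, Matrix.mul_add, trace_add,
    Matrix.mul_smul, Matrix.mul_smul, trace_smul, trace_smul, smul_eq_mul, smul_eq_mul]
  nlinarith [hle U hU, hle U' hU']

theorem isGreatest_trace_mul_transpose {r r' : ℝ≥0∞} [r.HolderConjugate r']
    (W : Matrix (Fin n) (Fin q) ℝ) :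
    IsGreatest ((fun U : Matrix (Fin n) (Fin q) ℝ => (U * Wᵀ).trace) '' {U | schattenNorm r' U ≤ 1})
      (schattenNorm r W) := by
  refine ⟨exists_schattenNorm_le_one_trace_eq W, ?_⟩
  rintro _ ⟨U, hU, rfl⟩
  exact (trace_mul_transpose_le_schattenNorm_mul U W).trans
    (mul_le_of_le_one_left (vecLpNorm_nonneg _ (singVal_nonneg W)) hU)

end duality

section moreau

open RealInnerProductSpace

variable {F : Type*} [NormedAddCommGroup F] [InnerProductSpace ℝ F]

lemma inner_add_sq_norm_sub_eq {σ : ℝ} (hσ : σ ≠ 0) (Z W P : F) :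
    ⟪P, W⟫ + 1 / (2 * σ) * ‖Z - W‖ ^ 2 =
      ‖Z‖ ^ 2 / (2 * σ) - σ / 2 * ‖P - σ⁻¹ • Z‖ ^ 2 + 1 / (2 * σ) * ‖Z - W - σ • P‖ ^ 2 := by
  simp only [norm_sub_sq_real, inner_sub_left, inner_smul_right, norm_smul, Real.norm_eq_abs,
    mul_pow, sq_abs, real_inner_comm Z P, real_inner_comm W P]
  field_simp
  ring

/-- The minimum is attained at `Z - σ • P`. -/
theorem isLeast_support_add_sq_norm_sub {K : Set F} (hK : Convex ℝ K) {f : F → ℝ}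
    (hf : ∀ w, IsGreatest ((fun u => ⟪u, w⟫) '' K) (f w)) {σ : ℝ} (hσ : 0 < σ) (Z : F)
    {P : F} (hP : P ∈ K) (hproj : ∀ u ∈ K, ‖σ⁻¹ • Z - P‖ ≤ ‖σ⁻¹ • Z - u‖) :
    IsLeast (Set.range fun W => f W + 1 / (2 * σ) * ‖Z - W‖ ^ 2)
      (‖Z‖ ^ 2 / (2 * σ) - σ / 2 * ‖P - σ⁻¹ • Z‖ ^ 2) := by
  have : Nonempty K := ⟨⟨P, hP⟩⟩
  have hbdd : BddBelow (Set.range fun u : K => ‖σ⁻¹ • Z - u‖) :=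
    ⟨0, by rintro _ ⟨u, rfl⟩; exact norm_nonneg _⟩
  have hdist : ‖σ⁻¹ • Z - P‖ = ⨅ u : K, ‖σ⁻¹ • Z - u‖ :=
    le_antisymm (le_ciInf fun u => hproj u u.2) (ciInf_le hbdd ⟨P, hP⟩)
  have hvar := (norm_eq_iInf_iff_real_inner_le_zero hK hP).mp hdist
  have hfP : ∀ W, ⟪P, W⟫ ≤ f W := fun W => (hf W).2 ⟨P, hP, rfl⟩
  -- by the variational inequality of the projection `P`
  have hfopt : f (Z - σ • P) = ⟪P, Z - σ • P⟫ := by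
    obtain ⟨u, hu, hfu⟩ := (hf (Z - σ • P)).1
    have hZP : Z - σ • P = σ • (σ⁻¹ • Z - P) := by
      rw [smul_sub, smul_inv_smul₀ hσ.ne']
    refine le_antisymm ?_ (hfP _)
    rw [← hfu]
    dsimp only
    rw [hZP, inner_smul_right, inner_smul_right]
    have hvu := hvar u hu
    rw [real_inner_comm, inner_sub_left] at hvu
    nlinarith
  refine ⟨⟨Z - σ • P, ?_⟩, ?_⟩
  · have h := inner_add_sq_norm_sub_eq hσ.ne' Z (Z - σ • P) P
    rw [sub_sub_cancel, sub_self, norm_zero] at h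
    dsimp only
    rw [hfopt, sub_sub_cancel]
    linarith
  · rintro _ ⟨W, rfl⟩
    have hsq : 0 ≤ 1 / (2 * σ) * ‖Z - W - σ • P‖ ^ 2 := by positivity
    linarith [hfP W, inner_add_sq_norm_sub_eq hσ.ne' Z W P]

end moreau

namespace Matrix

open RealInnerProductSpace

variable {n q : ℕ}

noncomputable def flattenEuclidean :
    Matrix (Fin n) (Fin q) ℝ ≃ₗ[ℝ] EuclideanSpace ℝ (Fin n × Fin q) :=
  (LinearEquiv.curry ℝ ℝ (Fin n) (Fin q)).symm.trans (WithLp.linearEquiv 2 ℝ _).symm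

@[simp] lemma flattenEuclidean_apply (A : Matrix (Fin n) (Fin q) ℝ) (ij : Fin n × Fin q) :
    flattenEuclidean A ij = A ij.1 ij.2 := rfl

lemma inner_flattenEuclidean (A B : Matrix (Fin n) (Fin q) ℝ) :
    ⟪flattenEuclidean A, flattenEuclidean B⟫ = (A * Bᵀ).trace := by
  simp [PiLp.inner_apply, Fintype.sum_prod_type, trace, mul_apply, mul_comm]

lemma norm_flattenEuclidean (A : Matrix (Fin n) (Fin q) ℝ) :
    ‖flattenEuclidean A‖ = frobNorm A := by
  simp [EuclideanSpace.norm_eq, Fintype.sum_prod_type, frobNorm]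

end Matrix

open RealInnerProductSpace in
theorem isLeast_schattenNorm_add_sq_frobNorm_sub {n q : ℕ} {p pstar : ℝ≥0∞}
    [p.HolderConjugate pstar] {σ : ℝ} (hσ : 0 < σ) (Z : Matrix (Fin n) (Fin q) ℝ)
    {P : Matrix (Fin n) (Fin q) ℝ} (hPmem : schattenNorm pstar P ≤ 1)
    (hPproj : ∀ U : Matrix (Fin n) (Fin q) ℝ, schattenNorm pstar U ≤ 1 →
      frobNorm (σ⁻¹ • Z - P) ≤ frobNorm (σ⁻¹ • Z - U)) :
    IsLeast (Set.range fun W => schattenNorm p W + 1 / (2 * σ) * frobNorm (Z - W) ^ 2)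
      (frobNorm Z ^ 2 / (2 * σ) - σ / 2 * frobNorm (P - σ⁻¹ • Z) ^ 2) := by
  set T := Matrix.flattenEuclidean (n := n) (q := q)
  have hinner : ∀ A B : Matrix (Fin n) (Fin q) ℝ, ⟪T A, T B⟫ = (A * Bᵀ).trace :=
    Matrix.inner_flattenEuclidean
  have hnorm : ∀ A : Matrix (Fin n) (Fin q) ℝ, ‖T A‖ = frobNorm A := Matrix.norm_flattenEuclidean
  set K := T '' {U | schattenNorm pstar U ≤ 1}
  have hK : Convex ℝ K :=
    (convex_setOf_schattenNorm_le_one (ENNReal.HolderConjugate.one_le pstar p)).linear_image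
      T.toLinearMap
  have hsupp : ∀ w, IsGreatest ((fun u => ⟪u, w⟫) '' K) (schattenNorm p (T.symm w)) := by
    intro w
    obtain ⟨W, rfl⟩ := T.surjective w
    simpa [K, Set.image_image, hinner] using isGreatest_trace_mul_transpose (r' := pstar) W
  have hproj : ∀ u ∈ K, ‖σ⁻¹ • T Z - T P‖ ≤ ‖σ⁻¹ • T Z - u‖ := by
    rintro _ ⟨U, hU, rfl⟩
    simpa only [← map_smul, ← map_sub, hnorm] using hPproj U hU
  have hmin := isLeast_support_add_sq_norm_sub hK hsupp hσ (T Z) ⟨P, hPmem, rfl⟩ hproj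
  have hfun : (fun w => schattenNorm p (T.symm w) + 1 / (2 * σ) * ‖T Z - w‖ ^ 2) =
      (fun W => schattenNorm p W + 1 / (2 * σ) * frobNorm (Z - W) ^ 2) ∘ T.symm := by
    ext w
    rw [Function.comp_apply, ← hnorm, map_sub, T.apply_symm_apply]
  rwa [hfun, T.symm.surjective.range_comp, ← map_smul, ← map_sub, hnorm, hnorm] at hmin

lemma EReal.iInf_coe_eq_of_isLeast {ι : Sort*} {g : ι → ℝ} {m : ℝ}
    (h : IsLeast (Set.range g) m) : ⨅ i, (g i : EReal) = m := by
  obtain ⟨i, hi⟩ := h.1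
  exact le_antisymm (iInf_le_of_le i (hi ▸ le_rfl))
    (le_iInf fun j => EReal.coe_le_coe_iff.mpr (h.2 ⟨j, rfl⟩))

theorem stmt5_general {n q : ℕ} (p pstar : ℝ≥0∞) (hpq : 1 / p + 1 / pstar = 1)
    (σ : ℝ) (hσ : 0 < σ) (c : ℝ) (Z : Matrix (Fin n) (Fin q) ℝ)
    (P : Matrix (Fin n) (Fin q) ℝ) (hPmem : schattenNorm pstar P ≤ 1)
    (hPproj : ∀ U : Matrix (Fin n) (Fin q) ℝ, schattenNorm pstar U ≤ 1 →
      frobNorm (σ⁻¹ • Z - P) ≤ frobNorm (σ⁻¹ • Z - U)) :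
    (⨅ W : Matrix (Fin n) (Fin q) ℝ,
        ((schattenNorm p W + ((1 / (2 * σ)) * frobNorm (Z - W) ^ 2 + c * σ) : ℝ) : EReal))
      = ((frobNorm Z ^ 2 / (2 * σ) + c * σ - σ / 2 * frobNorm (P - σ⁻¹ • Z) ^ 2 : ℝ) : EReal) := by
  have : p.HolderConjugate pstar :=
    ENNReal.holderConjugate_iff.mpr (by simpa only [one_div] using hpq)
  have hmin := isLeast_schattenNorm_add_sq_frobNorm_sub (p := p) hσ Z hPmem hPproj
  refine EReal.iInf_coe_eq_of_isLeast ⟨?_, ?_⟩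
  · obtain ⟨W, hW⟩ := hmin.1
    exact ⟨W, by dsimp only at hW ⊢; linarith⟩
  · rintro _ ⟨W, rfl⟩
    have hW := hmin.2 ⟨W, rfl⟩
    dsimp only at hW ⊢
    linarith

/-- Let `‖·‖_{S,p}` be the Schatten `p`-norm on `n × q` matrices, `p*` its Hölder
conjugate, `σ > 0`, `c ∈ ℝ`, `ω_σ(Z) = (1/2σ)‖Z‖² + cσ` (Frobenius norm).  Then
`(‖·‖_{S,p} □ ω_σ)(Z) = ‖Z‖²/(2σ) + cσ − (σ/2)‖Π_{B_{S,p*}}(Z/σ) − Z/σ‖²`,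
where `Π_{B_{S,p*}}` is the Frobenius projection onto the unit Schatten `p*`-ball. -/
theorem stmt5 {n q : ℕ} (p pstar : ℝ≥0∞) (hp : 1 ≤ p) (hpq : 1 / p + 1 / pstar = 1)
    (σ : ℝ) (hσ : 0 < σ) (c : ℝ) (Z : Matrix (Fin n) (Fin q) ℝ)
    (P : Matrix (Fin n) (Fin q) ℝ) (hPmem : schattenNorm pstar P ≤ 1)
    (hPproj : ∀ U : Matrix (Fin n) (Fin q) ℝ, schattenNorm pstar U ≤ 1 →
      frobNorm (σ⁻¹ • Z - P) ≤ frobNorm (σ⁻¹ • Z - U)) :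
    (⨅ W : Matrix (Fin n) (Fin q) ℝ,
        ((schattenNorm p W + ((1 / (2 * σ)) * frobNorm (Z - W) ^ 2 + c * σ) : ℝ) : EReal))
      = ((frobNorm Z ^ 2 / (2 * σ) + c * σ - σ / 2 * frobNorm (P - σ⁻¹ • Z) ^ 2 : ℝ) : EReal) :=
  stmt5_general p pstar hpq σ hσ c Z P hPmem hPproj
end

section
/- Let Z ∈ R^{n×q} with singular values γ_1, …, γ_n (padding with zeros if q < n), and σ > 0. Then min over positive definite S ≻ 0 of (1/2)Tr(Zᵀ S⁻¹ Z) + (1/2)Tr(S) + (σ²/2)Tr(S⁻¹) equals ∑_{i=1}^{n} √(γ_i² + σ²), with minimizer S = (ZZᵀ + σ² Id)^{1/2}. -/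
/-!
With `A = ZZᵀ + σ²I` and `C = A^{1/2}`, the objective equals `½ Tr(S⁻¹A) + ½ Tr S`.
Expanding `0 ≤ Tr((C - S)ᴴ S⁻¹ (C - S))` gives `Tr(S⁻¹A) + Tr S ≥ 2 Tr C`, with equality at
`S = C`. Since `C` is the function `x ↦ √(x + σ²)` of `ZZᵀ` in the functional calculus,
`Tr C = ∑ √(γᵢ² + σ²)`.
-/

open Matrix

section
open scoped ComplexOrder

/-- The positive semidefinite square root of a positive semidefinite matrix, as defined in
Mathlib (December 2024); the definition has since been removed from Mathlib. -/
noncomputable def Matrix.PosSemidef.sqrt {n 𝕜 : Type*} [Fintype n] [DecidableEq n] [RCLike 𝕜]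
    {A : Matrix n n 𝕜} (hA : A.PosSemidef) : Matrix n n 𝕜 :=
  hA.1.eigenvectorUnitary.1 * diagonal ((↑) ∘ Real.sqrt ∘ hA.1.eigenvalues) *
    (star hA.1.eigenvectorUnitary : Matrix n n 𝕜)

end

namespace Matrix

open scoped ComplexOrder MatrixOrder

variable {n 𝕜 : Type*} [Fintype n] [DecidableEq n] [RCLike 𝕜]

theorem IsHermitian.trace_cfc {A : Matrix n n 𝕜} (hA : A.IsHermitian) (f : ℝ → ℝ) :
    (cfc f A).trace = ∑ i, (f (hA.eigenvalues i) : 𝕜) := by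
  rw [hA.cfc_eq, IsHermitian.cfc, Unitary.conjStarAlgAut_apply, trace_mul_cycle,
    Unitary.coe_star_mul_self, one_mul, trace_diagonal]
  rfl

theorem IsHermitian.trace_cfc_add_smul_one {H : Matrix n n 𝕜} (hH : H.IsHermitian)
    (f : ℝ → ℝ) (c : ℝ) :
    (cfc f (H + c • 1)).trace = ∑ i, (f (hH.eigenvalues i + c) : 𝕜) := by
  have hshift : H + c • 1 = cfc (· + c) H := by
    rw [cfc_add_const c (fun x => x) H, cfc_id' ℝ H, Algebra.algebraMap_eq_smul_one]
  rw [hshift, ← cfc_comp' f (· + c) H ((H.finite_real_spectrum.image _).continuousOn f),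
    hH.trace_cfc]

namespace PosSemidef

theorem sqrt_eq_cfc {A : Matrix n n 𝕜} (hA : A.PosSemidef) : hA.sqrt = cfc Real.sqrt A := by
  rw [hA.1.cfc_eq]; rfl

theorem isHermitian_sqrt {A : Matrix n n 𝕜} (hA : A.PosSemidef) : hA.sqrt.IsHermitian := by
  rw [sqrt_eq_cfc]; exact cfc_predicate _ _

theorem sqrt_mul_sqrt {A : Matrix n n 𝕜} (hA : A.PosSemidef) : hA.sqrt * hA.sqrt = A := by
  rw [sqrt_eq_cfc, ← cfcₙ_eq_cfc, ← CFC.sqrt_eq_real_sqrt A hA.nonneg,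
    CFC.sqrt_mul_sqrt_self A hA.nonneg]

end PosSemidef

theorem PosDef.two_mul_trace_le {K : Type*} [Field K] [PartialOrder K] [StarRing K]
    [IsOrderedAddMonoid K] {S C : Matrix n n K} (hS : S.PosDef) (hC : C.IsHermitian) :
    2 * C.trace ≤ (S⁻¹ * (C * C)).trace + S.trace := by
  have hdet : IsUnit S.det := (isUnit_iff_isUnit_det S).mp hS.isUnit
  have hsq : 0 ≤ ((C - S)ᴴ * S⁻¹ * (C - S)).trace :=
    (hS.inv.posSemidef.conjTranspose_mul_mul_same _).trace_nonneg
  have hexpand : (C - S)ᴴ * S⁻¹ * (C - S)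
      = C * S⁻¹ * C - C * (S⁻¹ * S) - S * S⁻¹ * C + S * (S⁻¹ * S) := by
    rw [conjTranspose_sub, hC.eq, hS.isHermitian.eq]
    noncomm_ring
  rw [hexpand, nonsing_inv_mul _ hdet, mul_nonsing_inv _ hdet, mul_one, one_mul, mul_one,
    trace_add, trace_sub, trace_sub, trace_mul_cycle, trace_mul_comm] at hsq
  rw [← sub_nonneg]
  convert hsq using 1
  ring

theorem trace_transpose_mul_mul_add_mul_trace {m k R : Type*} [Fintype m] [Fintype k]
    [DecidableEq m] [CommRing R] (Z : Matrix m k R) (T : Matrix m m R) (c : R) :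
    (Zᵀ * T * Z).trace + c * T.trace = (T * (Z * Zᵀ + c • 1)).trace := by
  rw [mul_add, trace_add, mul_smul_comm, mul_one, trace_smul, smul_eq_mul, trace_mul_cycle,
    trace_mul_comm (Z * Zᵀ)]

end Matrix

/-- For `Z ∈ ℝ^{n×q}` with singular values `γ_i` (squares are the eigenvalues of
`ZZᵀ`, padded with zeros) and `σ > 0`, the minimum over positive definite `S` of
`(1/2)Tr(Zᵀ S⁻¹ Z) + (1/2)Tr(S) + (σ²/2)Tr(S⁻¹)` equals `∑ √(γ_i² + σ²)`, with
minimizer `S = (ZZᵀ + σ² Id)^{1/2}` (the positive semidefinite square root). -/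
theorem stmt9 {n q : ℕ} (Z : Matrix (Fin n) (Fin q) ℝ) (σ : ℝ) (hσ : 0 < σ)
    (hps : (Z * Zᴴ + σ ^ 2 • (1 : Matrix (Fin n) (Fin n) ℝ)).PosSemidef) :
    (∀ S : Matrix (Fin n) (Fin n) ℝ, S.PosDef →
        (∑ i, Real.sqrt ((Matrix.isHermitian_mul_conjTranspose_self Z).eigenvalues i
            + σ ^ 2))
          ≤ (1 / 2) * (Zᵀ * S⁻¹ * Z).trace + (1 / 2) * S.trace
            + (σ ^ 2 / 2) * (S⁻¹).trace)
      ∧ (1 / 2) * (Zᵀ * hps.sqrt⁻¹ * Z).trace + (1 / 2) * hps.sqrt.trace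
          + (σ ^ 2 / 2) * (hps.sqrt⁻¹).trace
        = ∑ i, Real.sqrt ((Matrix.isHermitian_mul_conjTranspose_self Z).eigenvalues i
            + σ ^ 2) := by
  have hobj (T : Matrix (Fin n) (Fin n) ℝ) : (Zᵀ * T * Z).trace + σ ^ 2 * T.trace
      = (T * (Z * Zᴴ + σ ^ 2 • 1)).trace := by
    rw [conjTranspose_eq_transpose_of_trivial, trace_transpose_mul_mul_add_mul_trace]
  have hA : (Z * Zᴴ + σ ^ 2 • (1 : Matrix (Fin n) (Fin n) ℝ)).PosDef :=
    PosDef.posSemidef_add (posSemidef_self_mul_conjTranspose Z) (PosDef.one.smul (pow_pos hσ 2))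
  have htrace : hps.sqrt.trace = ∑ i, Real.sqrt
      ((Matrix.isHermitian_mul_conjTranspose_self Z).eigenvalues i + σ ^ 2) := by
    rw [hps.sqrt_eq_cfc, (isHermitian_mul_conjTranspose_self Z).trace_cfc_add_smul_one]
    rfl
  have hCC := hps.sqrt_mul_sqrt
  have hC := hps.isHermitian_sqrt
  generalize hps.sqrt = C at hCC hC htrace ⊢
  refine ⟨fun S hS => ?_, ?_⟩
  · linarith [hobj S⁻¹, hCC ▸ hS.two_mul_trace_le hC]
  · have hdet : IsUnit C.det := isUnit_of_mul_isUnit_left (y := C.det) <| by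
      rw [← det_mul, hCC]
      exact (isUnit_iff_isUnit_det _).mp hA.isUnit
    have hinv : C⁻¹ * (Z * Zᴴ + σ ^ 2 • 1) = C := hCC ▸ nonsing_inv_mul_cancel_left C C hdet
    linarith [hinv ▸ hobj C⁻¹]
end

section
/- Let Σ^emp be a symmetric positive semidefinite n×n matrix with eigendecomposition Σ^emp = U diag(σ_1², …, σ_n²) Uᵀ, and σ_min > 0. Then the minimizer over precision matrices Θ with 0 ≺ Θ ⪯ (1/σ_min²) Id of the function ⟨Σ^emp, Θ⟩ − log det Θ is Θ̂ = U diag(1/(σ_i² ∨ σ_min²)) Uᵀ. -/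
/-! The objective `Θ ↦ ⟨S, Θ⟩ - log det Θ` is convex and `Θhat` satisfies its KKT conditions with
multiplier `Λ = U diag(σᵢ² ∨ σ_min² - σᵢ²) Uᵀ ⪰ 0`: stationarity `S + Λ = Θhat⁻¹` and complementary
slackness `Λ (σ_min⁻² Id - Θhat) = 0`, both of which hold eigenvalue by eigenvalue. Convexity of
`-log det` enters through `log det M + log det Θ ≤ tr (M Θ) - n` for positive definite `M, Θ`
(`log x ≤ x - 1` on the eigenvalues of `B Θ Bᴴ`, where `M = Bᴴ B`), and feasibility of `Θ` through
`tr (Λ (σ_min⁻² Id - Θ)) ≥ 0`. -/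

open Matrix

namespace Matrix

variable {ι : Type*} [Fintype ι] [DecidableEq ι]

open scoped MatrixOrder in
theorem PosSemidef.trace_mul_nonneg {P Q : Matrix ι ι ℝ} (hP : P.PosSemidef) (hQ : Q.PosSemidef) :
    0 ≤ (P * Q).trace := by
  obtain ⟨B, rfl⟩ := CStarAlgebra.nonneg_iff_eq_star_mul_self.mp hQ.nonneg
  rw [← Matrix.mul_assoc, trace_mul_comm, ← Matrix.mul_assoc]
  exact (hP.mul_mul_conjTranspose_same B).trace_nonneg

theorem PosDef.log_det_le_trace_sub_card {X : Matrix ι ι ℝ} (hX : X.PosDef) :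
    Real.log X.det ≤ X.trace - Fintype.card ι := by
  have hpos := hX.eigenvalues_pos
  rw [hX.1.det_eq_prod_eigenvalues, hX.1.trace_eq_sum_eigenvalues]
  simp only [RCLike.ofReal_real_eq_id, id_eq]
  rw [Real.log_prod fun i _ => (hpos i).ne', ← Finset.card_univ, Finset.card_eq_sum_ones,
    Nat.cast_sum, Nat.cast_one, ← Finset.sum_sub_distrib]
  exact Finset.sum_le_sum fun i _ => Real.log_le_sub_one_of_pos (hpos i)

open scoped MatrixOrder in
theorem PosDef.log_det_add_log_det_le_trace_mul {M Θ : Matrix ι ι ℝ} (hM : M.PosDef)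
    (hΘ : Θ.PosDef) : Real.log M.det + Real.log Θ.det ≤ (M * Θ).trace - Fintype.card ι := by
  obtain ⟨B, rfl⟩ := CStarAlgebra.nonneg_iff_eq_star_mul_self.mp hM.posSemidef.nonneg
  have hB : IsUnit B := by
    have h := (isUnit_iff_isUnit_det _).mp hM.isUnit
    rw [det_mul] at h
    exact (isUnit_iff_isUnit_det B).mpr (isUnit_of_mul_isUnit_right h)
  have hX : (B * Θ * star B).PosDef := hB.posDef_star_right_conjugate_iff.mpr hΘ
  have hdet : (B * Θ * star B).det = (star B * B).det * Θ.det := by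
    simp only [det_mul]; ring
  have htrace : (B * Θ * star B).trace = (star B * B * Θ).trace := by
    rw [trace_mul_cycle, Matrix.mul_assoc]
  have := hX.log_det_le_trace_sub_card
  rwa [hdet, htrace, Real.log_mul hM.det_pos.ne' hΘ.det_pos.ne'] at this

open scoped ComplexOrder in
theorem posSemidef_conjStarAlgAut_iff {𝕜 : Type*} [RCLike 𝕜] (u : unitary (Matrix ι ι 𝕜))
    {X : Matrix ι ι 𝕜} : (Unitary.conjStarAlgAut 𝕜 _ u X).PosSemidef ↔ X.PosSemidef :=
  Unitary.isUnit_coe.posSemidef_star_right_conjugate_iff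

open scoped ComplexOrder in
theorem posDef_conjStarAlgAut_iff {𝕜 : Type*} [RCLike 𝕜] (u : unitary (Matrix ι ι 𝕜))
    {X : Matrix ι ι 𝕜} : (Unitary.conjStarAlgAut 𝕜 _ u X).PosDef ↔ X.PosDef :=
  Unitary.isUnit_coe.posDef_star_right_conjugate_iff

theorem trace_mul_sub_log_det_le_of_kkt {S Λ C Θhat Θ : Matrix ι ι ℝ} (hΘhat : Θhat.PosDef)
    (hΛ : Λ.PosSemidef) (hstat : (S + Λ) * Θhat = 1) (hslack : Λ * (C - Θhat) = 0)
    (hΘ : Θ.PosDef) (hCΘ : (C - Θ).PosSemidef) :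
    (S * Θhat).trace - Real.log Θhat.det ≤ (S * Θ).trace - Real.log Θ.det := by
  have hM : S + Λ = Θhat⁻¹ := (inv_eq_left_inv hstat).symm
  have hlogdet : Real.log (S + Λ).det = -Real.log Θhat.det := by
    rw [hM, det_nonsing_inv, Ring.inverse_eq_inv', Real.log_inv]
  have hlog := (hM ▸ hΘhat.inv).log_det_add_log_det_le_trace_mul hΘ
  have hcard : ((S + Λ) * Θhat).trace = Fintype.card ι := by
    rw [hstat, trace_one]
  have hΛΘ : (Λ * Θ).trace ≤ (Λ * Θhat).trace := by
    have hfeas := hΛ.trace_mul_nonneg hCΘ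
    have hzero := congrArg trace hslack
    rw [Matrix.mul_sub, trace_sub] at hfeas hzero
    rw [trace_zero] at hzero
    linarith
  rw [hlogdet, Matrix.add_mul, trace_add] at hlog
  rw [Matrix.add_mul, trace_add] at hcard
  linarith

end Matrix

theorem max_sub_mul_inv_sub_one_div_max (a s : ℝ) :
    (max a s - a) * (s⁻¹ - 1 / max a s) = 0 := by
  rcases le_total s a with h | h
  · rw [max_eq_left h, sub_self, zero_mul]
  · rw [max_eq_right h, one_div, sub_self, mul_zero]

/-- Let `Σ^emp` be symmetric positive semidefinite with eigenvalues `σ_i²` and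
eigenvector matrix `U`, and `σ_min > 0`.  The minimizer over precision matrices
`0 ≺ Θ ⪯ (1/σ_min²) Id` of `⟨Σ^emp, Θ⟩ − log det Θ` is
`Θ̂ = U diag(1/(σ_i² ∨ σ_min²)) Uᵀ`. -/
theorem stmt14 {n : ℕ} (Semp : Matrix (Fin n) (Fin n) ℝ) (hSemp : Semp.PosSemidef)
    (σmin : ℝ) (hσ : 0 < σmin) :
    let U : Matrix (Fin n) (Fin n) ℝ := hSemp.1.eigenvectorUnitary
    let Θhat : Matrix (Fin n) (Fin n) ℝ :=
      U * Matrix.diagonal (fun i => 1 / max (hSemp.1.eigenvalues i) (σmin ^ 2)) * star U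
    Θhat.PosDef
      ∧ ((σmin ^ 2)⁻¹ • (1 : Matrix (Fin n) (Fin n) ℝ) - Θhat).PosSemidef
      ∧ ∀ Θ : Matrix (Fin n) (Fin n) ℝ, Θ.PosDef →
          ((σmin ^ 2)⁻¹ • (1 : Matrix (Fin n) (Fin n) ℝ) - Θ).PosSemidef →
          (Sempᵀ * Θhat).trace - Real.log Θhat.det
            ≤ (Sempᵀ * Θ).trace - Real.log Θ.det := by
  intro U Θhat
  set σsq := hSemp.1.eigenvalues
  set m : Fin n → ℝ := fun i => max (σsq i) (σmin ^ 2)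
  set conj := Unitary.conjStarAlgAut ℝ (Matrix (Fin n) (Fin n) ℝ) hSemp.1.eigenvectorUnitary
  have hs : 0 < σmin ^ 2 := by positivity
  have hm : ∀ i, 0 < m i := fun i => hs.trans_le (le_max_right _ _)
  have hΘhat : Θhat = conj (diagonal fun i => 1 / m i) := rfl
  have hS : Sempᵀ = conj (diagonal σsq) := by
    rw [← conjTranspose_eq_transpose_of_trivial, hSemp.1.eq]
    simpa only [RCLike.ofReal_real_eq_id, Function.id_comp] using hSemp.1.spectral_theorem
  have hgap : (σmin ^ 2)⁻¹ • (1 : Matrix (Fin n) (Fin n) ℝ) - Θhat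
      = conj (diagonal fun i => (σmin ^ 2)⁻¹ - 1 / m i) := by
    rw [hΘhat, ← map_one conj, ← map_smul, ← map_sub, smul_one_eq_diagonal, diagonal_sub]
  have hΘhat_pd : Θhat.PosDef := by
    rw [hΘhat, posDef_conjStarAlgAut_iff, posDef_diagonal_iff]
    exact fun i => one_div_pos.mpr (hm i)
  refine ⟨hΘhat_pd, ?_, fun Θ hΘ hCΘ => ?_⟩
  · rw [hgap, posSemidef_conjStarAlgAut_iff, posSemidef_diagonal_iff]
    exact fun i => sub_nonneg.mpr (one_div (m i) ▸ inv_anti₀ hs (le_max_right _ _))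
  refine trace_mul_sub_log_det_le_of_kkt (Λ := conj (diagonal fun i => m i - σsq i)) hΘhat_pd
    ((posSemidef_conjStarAlgAut_iff _).mpr (posSemidef_diagonal_iff.mpr fun i => ?_)) ?_ ?_ hΘ hCΘ
  · exact sub_nonneg.mpr (le_max_left _ _)
  · rw [hS, hΘhat, ← map_add, ← map_mul, diagonal_add, diagonal_mul_diagonal, ← map_one conj,
      ← diagonal_one]
    congr 2
    funext i
    rw [add_sub_cancel, mul_one_div_cancel (hm i).ne']
  · rw [hgap, ← map_mul, diagonal_mul_diagonal]
    simp only [m, max_sub_mul_inv_sub_one_div_max, diagonal_zero, map_zero]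
end

section
/- Let S be symmetric positive definite, X ∈ R^{n×p}, Ȳ ∈ R^{n×q}, λ > 0, j ∈ [p] with X_{:j} ≠ 0. Consider minimizing over the single row B_{j:} ∈ R^{1×q} the function b ↦ (1/(2nq))‖Ȳ − ∑_{k≠j} X_{:k}B_{k:} − X_{:j}b‖²_{S⁻¹} + λ‖b‖. The unique minimizer is b* = BST(B_{j:} + X_{:j}ᵀ S⁻¹ (Ȳ − XB)/‖X_{:j}‖²_{S⁻¹}, λnq/‖X_{:j}‖²_{S⁻¹}), where BST(x, τ) = (1 − τ/‖x‖)₊ x is block soft-thresholding and ‖X_{:j}‖²_{S⁻¹} = X_{:j}ᵀ S⁻¹ X_{:j}. -/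
/-!
With the other rows fixed, each column of the residual `Ȳ - X B` is affine in the row
`b`, so the data-fit term equals `(L / 2nq) ‖b - v‖² + const`, where
`L = ‖X_{:j}‖²_{S⁻¹} > 0` and `v` is the argument of `BST`. The objective is thus
`a/2 ‖b - v‖² + λ‖b‖ + const` with `a = L / nq`, and `p = BST(v, λ/a)` is its unique
minimizer: `v - p` is `λ/a` times a subgradient of the norm at `p`, which gives the
quadratic growth `f b ≥ f p + a/2 ‖b - p‖²`.
-/

open Matrix

/-- Block soft-thresholding: `BST(x, τ) = (1 − τ/‖x‖)₊ x`. -/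
noncomputable def bst {q : ℕ} (x : Fin q → ℝ) (τ : ℝ) : Fin q → ℝ :=
  max (1 - τ / Real.sqrt (∑ k, (x k) ^ 2)) 0 • x

section SoftThreshold

variable {E : Type*} [NormedAddCommGroup E] [InnerProductSpace ℝ E]

noncomputable def softThreshold (τ : ℝ) (v : E) : E :=
  max (1 - τ / ‖v‖) 0 • v

theorem inner_sub_softThreshold_le {τ : ℝ} (hτ : 0 ≤ τ) (v b : E) :
    inner ℝ (b - softThreshold τ v) (v - softThreshold τ v)
      ≤ τ * ‖b‖ - τ * ‖softThreshold τ v‖ := by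
  rcases eq_or_ne v 0 with rfl | hv
  · simp only [softThreshold, norm_zero, smul_zero, sub_zero, inner_zero_right, mul_zero]
    positivity
  have hv' : 0 < ‖v‖ := norm_pos_iff.2 hv
  have hcs : inner ℝ b v ≤ ‖b‖ * ‖v‖ := real_inner_le_norm b v
  unfold softThreshold
  rcases le_total (1 - τ / ‖v‖) 0 with h | h
  · have hvτ : ‖v‖ ≤ τ := by rwa [sub_nonpos, one_le_div hv'] at h
    rw [max_eq_right h]
    simp only [zero_smul, sub_zero, norm_zero, mul_zero]
    nlinarith [norm_nonneg b]
  · have hsub : v - (1 - τ / ‖v‖) • v = (τ / ‖v‖) • v := by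
      rw [sub_smul, one_smul, sub_sub_cancel]
    rw [max_eq_left h, hsub, inner_smul_right, inner_sub_left, real_inner_smul_left,
      real_inner_self_eq_norm_sq, norm_smul, Real.norm_of_nonneg h]
    field_simp
    nlinarith

theorem softThreshold_quadratic_growth {a lam : ℝ} (ha : 0 < a) (hlam : 0 ≤ lam) (v b : E) :
    a / 2 * ‖softThreshold (lam / a) v - v‖ ^ 2 + lam * ‖softThreshold (lam / a) v‖
        + a / 2 * ‖b - softThreshold (lam / a) v‖ ^ 2
      ≤ a / 2 * ‖b - v‖ ^ 2 + lam * ‖b‖ := by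
  have hsub := mul_le_mul_of_nonneg_left
    (inner_sub_softThreshold_le (div_nonneg hlam ha.le) v b) ha.le
  rw [mul_sub, ← mul_assoc, ← mul_assoc, mul_div_cancel₀ _ ha.ne'] at hsub
  set p := softThreshold (lam / a) v
  rw [show b - v = (b - p) - (v - p) by abel, norm_sub_sq_real (b - p), norm_sub_rev p v]
  nlinarith

theorem softThreshold_isUniqueMinimizer {a lam C : ℝ} (ha : 0 < a) (hlam : 0 ≤ lam) (v : E)
    (f : E → ℝ) (hf : ∀ b, f b = a / 2 * ‖b - v‖ ^ 2 + lam * ‖b‖ + C) :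
    (∀ b, f (softThreshold (lam / a) v) ≤ f b) ∧
      ∀ b, f b ≤ f (softThreshold (lam / a) v) → b = softThreshold (lam / a) v := by
  have growth (b : E) : a / 2 * ‖b - softThreshold (lam / a) v‖ ^ 2
      ≤ f b - f (softThreshold (lam / a) v) := by
    rw [hf, hf]; linarith [softThreshold_quadratic_growth ha hlam v b]
  refine ⟨fun b => ?_, fun b hb => ?_⟩
  · nlinarith [growth b]
  · have hdist : ‖b - softThreshold (lam / a) v‖ ^ 2 ≤ 0 := by nlinarith [growth b]
    rw [← sub_eq_zero, ← norm_eq_zero]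
    nlinarith [norm_nonneg (b - softThreshold (lam / a) v)]

end SoftThreshold

theorem bst_eq_softThreshold {q : ℕ} (x : Fin q → ℝ) (τ : ℝ) :
    bst x τ = (softThreshold τ (WithLp.toLp 2 x)).ofLp := by
  simp [bst, softThreshold, EuclideanSpace.norm_eq]

section Residual

variable {R : Type*} [CommRing R] {m o p : Type*}

theorem transpose_mul_mul_apply [Fintype m] (M : Matrix m p R) (A : Matrix m m R)
    (N : Matrix m o R) (i : p) (k : o) : (Mᵀ * A * N) i k = Mᵀ i ⬝ᵥ A *ᵥ Nᵀ k := by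
  simp only [mul_apply, dotProduct, mulVec, transpose_apply, Finset.sum_mul, Finset.mul_sum]
  rw [Finset.sum_comm]
  simp only [mul_assoc]

theorem trace_transpose_mul_mul_self [Fintype m] [Fintype o] (M : Matrix m o R)
    (A : Matrix m m R) :
    (Mᵀ * A * M).trace = ∑ k, Mᵀ k ⬝ᵥ A *ᵥ Mᵀ k := by
  simp only [trace, diag_apply, transpose_mul_mul_apply]

theorem Matrix.PosDef.transpose_mul_mul_apply_diag_pos [Fintype m] {A : Matrix m m ℝ}
    (hA : A.PosDef) (X : Matrix m p ℝ) {j : p} (hXj : (fun i => X i j) ≠ 0) :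
    0 < (Xᵀ * A * X) j j := by
  have hpos := hA.dotProduct_mulVec_pos hXj
  rw [star_trivial] at hpos
  rw [transpose_mul_mul_apply]
  exact hpos

theorem dotProduct_mulVec_sub_smul [Fintype m] {A : Matrix m m R} (hA : A.IsSymm)
    (r x : m → R) (t : R) :
    (r - t • x) ⬝ᵥ A *ᵥ (r - t • x)
      = r ⬝ᵥ A *ᵥ r - 2 * t * (x ⬝ᵥ A *ᵥ r) + t ^ 2 * (x ⬝ᵥ A *ᵥ x) := by
  have hswap : r ⬝ᵥ A *ᵥ x = x ⬝ᵥ A *ᵥ r := by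
    rw [dotProduct_mulVec, dotProduct_comm, ← vecMul_transpose, hA.eq]
  simp only [mulVec_sub, mulVec_smul, dotProduct_sub, sub_dotProduct, dotProduct_smul,
    smul_dotProduct, hswap, smul_eq_mul]
  ring

theorem mul_updateRow_apply [Fintype p] [DecidableEq p] (X : Matrix m p R) (B : Matrix p o R)
    (j : p) (b : o → R) (i : m) (k : o) :
    (X * B.updateRow j b) i k = (X * B) i k + X i j * (b k - B j k) := by
  simp only [mul_apply, updateRow_apply, mul_ite, ← Finset.sum_erase_add _ _ (Finset.mem_univ j),
    if_true]
  rw [Finset.sum_congr rfl fun l hl => if_neg (Finset.ne_of_mem_erase hl)]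
  ring

theorem trace_residual_updateRow [Fintype m] [Fintype o] [Fintype p] [DecidableEq p]
    {A : Matrix m m R} (hA : A.IsSymm) (Y : Matrix m o R) (X : Matrix m p R) (B : Matrix p o R)
    (j : p) (b : o → R) :
    ((Y - X * B.updateRow j b)ᵀ * A * (Y - X * B.updateRow j b)).trace
      = ((Y - X * B)ᵀ * A * (Y - X * B)).trace
        - 2 * ∑ k, (b k - B j k) * (Xᵀ * A * (Y - X * B)) j k
        + (Xᵀ * A * X) j j * ∑ k, (b k - B j k) ^ 2 := by
  have hcol (k : o) :
      (Y - X * B.updateRow j b)ᵀ k = (Y - X * B)ᵀ k - (b k - B j k) • Xᵀ j := by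
    ext i
    simp only [transpose_apply, Matrix.sub_apply, mul_updateRow_apply, Pi.sub_apply, Pi.smul_apply,
      smul_eq_mul]
    ring
  rw [trace_transpose_mul_mul_self, trace_transpose_mul_mul_self, transpose_mul_mul_apply]
  simp only [transpose_mul_mul_apply, hcol, dotProduct_mulVec_sub_smul hA,
    Finset.sum_add_distrib, Finset.sum_sub_distrib, Finset.mul_sum]
  congr 1
  · congr 1
    exact Finset.sum_congr rfl fun k _ => by ring
  · exact Finset.sum_congr rfl fun k _ => by ring

theorem trace_residual_updateRow_eq_add_sq {K : Type*} [Field K] [Fintype m] [Fintype o]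
    [Fintype p] [DecidableEq p] {A : Matrix m m K} (hA : A.IsSymm) (Y : Matrix m o K)
    (X : Matrix m p K) (B : Matrix p o K) (j : p) (hL : (Xᵀ * A * X) j j ≠ 0) (b : o → K) :
    ((Y - X * B.updateRow j b)ᵀ * A * (Y - X * B.updateRow j b)).trace
      = (Xᵀ * A * X) j j
          * ∑ k, (b k - (B j k + (Xᵀ * A * (Y - X * B)) j k / (Xᵀ * A * X) j j)) ^ 2
        + (((Y - X * B)ᵀ * A * (Y - X * B)).trace
          - ∑ k, (Xᵀ * A * (Y - X * B)) j k ^ 2 / (Xᵀ * A * X) j j) := by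
  rw [trace_residual_updateRow hA]
  set L := (Xᵀ * A * X) j j
  set M := Xᵀ * A * (Y - X * B)
  have hsq (k : o) : L * (b k - (B j k + M j k / L)) ^ 2
      = L * (b k - B j k) ^ 2 - 2 * ((b k - B j k) * M j k) + M j k ^ 2 / L := by
    field_simp
    ring
  simp only [Finset.mul_sum, hsq, Finset.sum_add_distrib, Finset.sum_sub_distrib]
  ring

end Residual

/-- Single-row minimization for the concomitant objective with `S` fixed: the unique
minimizer over the `j`-th row is given by block soft-thresholding. -/
theorem stmt16 {n p q : ℕ} (hn : 0 < n) (hq : 0 < q)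
    (S : Matrix (Fin n) (Fin n) ℝ) (hS : S.PosDef)
    (X : Matrix (Fin n) (Fin p) ℝ) (Ybar : Matrix (Fin n) (Fin q) ℝ)
    (lam : ℝ) (hlam : 0 < lam) (j : Fin p)
    (hXj : (fun i => X i j) ≠ 0)
    (B : Matrix (Fin p) (Fin q) ℝ) :
    let L : ℝ := (Xᵀ * S⁻¹ * X) j j
    let g : (Fin q → ℝ) → ℝ := fun b =>
      (1 / (2 * n * q)) * ((Ybar - X * B.updateRow j b)ᵀ * S⁻¹
          * (Ybar - X * B.updateRow j b)).trace
        + lam * Real.sqrt (∑ k, (b k) ^ 2)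
    let bstar : Fin q → ℝ :=
      bst (fun k => B j k + (Xᵀ * S⁻¹ * (Ybar - X * B)) j k / L) (lam * n * q / L)
    (∀ b, g bstar ≤ g b) ∧ ∀ b, g b ≤ g bstar → b = bstar := by
  intro L g bstar
  have hSinv : S⁻¹.PosDef := hS.inv
  have hsymm : S⁻¹.IsSymm := isHermitian_iff_isSymm.mp hSinv.isHermitian
  have hL : 0 < L := hSinv.transpose_mul_mul_apply_diag_pos X hXj
  have hnq : (0 : ℝ) < n * q := by positivity
  set v : Fin q → ℝ := fun k => B j k + (Xᵀ * S⁻¹ * (Ybar - X * B)) j k / L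
  set C := ((Ybar - X * B)ᵀ * S⁻¹ * (Ybar - X * B)).trace
    - ∑ k, (Xᵀ * S⁻¹ * (Ybar - X * B)) j k ^ 2 / L
  have hg (b : Fin q → ℝ) : g b = L / (n * q) / 2 * ‖WithLp.toLp 2 b - WithLp.toLp 2 v‖ ^ 2
      + lam * ‖WithLp.toLp 2 b‖ + C / (2 * n * q) := by
    simp only [g]
    rw [trace_residual_updateRow_eq_add_sq hsymm _ _ _ _ hL.ne', ← WithLp.toLp_sub,
      EuclideanSpace.real_norm_sq_eq, EuclideanSpace.norm_eq]
    simp only [Pi.sub_apply, Real.norm_eq_abs, sq_abs]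
    ring
  obtain ⟨hmin, huniq⟩ := softThreshold_isUniqueMinimizer (div_pos hL hnq) hlam.le
    (WithLp.toLp 2 v) (fun e => g e.ofLp) fun e => hg e.ofLp
  have hτ : lam / (L / (n * q)) = lam * n * q / L := by field_simp
  have hbstar : bstar = (softThreshold (lam / (L / (n * q))) (WithLp.toLp 2 v)).ofLp := by
    rw [hτ, ← bst_eq_softThreshold]
  rw [hbstar]
  exact ⟨fun b => hmin (WithLp.toLp 2 b), fun b hb => congrArg WithLp.ofLp (huniq _ hb)⟩
end
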